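/- arXiv:0709.2413 — 2 statements merged into one kernel-verified Lean document; each statement's English description precedes it below -/
import Mathlib

section
/- A Hom-coalgebra (V, Δ, β) is a Hom-Lie admissible Hom-coalgebra (i.e., Δ_L = Δ - Δ^op satisfies c_β(Δ_L) + Φ_{(213)}∘c_β(Δ_L) + Φ_{(231)}∘c_β(Δ_L) = 0) if and only if Σ_{σ∈S₃} sgn(σ) Φ_σ ∘ c_β(Δ) = 0. -/
/-! Expanding `c_β(Δ - Δ^op)` bilinearly, each of its eight terms is a tensor-factor permutation
of `P = (Δ ⊗ β) ∘ Δ` or of `Q = (β ⊗ Δ) ∘ Δ`, so `c_β(Δ_L) = A ∘ P - B ∘ Q` for two signed sums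
`A, B` of four permutations. In the group algebra of `S₃`, with `c` a 3-cycle,
`(1 + c + c²) A = (1 + c + c²) B = 2 Σ_σ sgn(σ) σ`; hence the admissibility expression
`(1 + c + c²) ∘ c_β(Δ_L)` equals `2 Σ_σ sgn(σ) Φ_σ ∘ c_β(Δ)`, and `2` is invertible. -/

open TensorProduct

noncomputable section

variable (K : Type*) [Field K] (M : Type*) [AddCommGroup M] [Module K M]

/-- The permutation `Φ_{(12)}` of the first two tensor factors of `M ⊗ (M ⊗ M)`. -/
def phi12 : M ⊗[K] (M ⊗[K] M) →ₗ[K] M ⊗[K] (M ⊗[K] M) :=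
  (TensorProduct.assoc K M M M).toLinearMap ∘ₗ
    LinearMap.rTensor M (TensorProduct.comm K M M).toLinearMap ∘ₗ
      (TensorProduct.assoc K M M M).symm.toLinearMap

/-- The permutation `Φ_{(23)}` of the last two tensor factors. -/
def phi23 : M ⊗[K] (M ⊗[K] M) →ₗ[K] M ⊗[K] (M ⊗[K] M) :=
  LinearMap.lTensor M (TensorProduct.comm K M M).toLinearMap

/-- `Φ_{(13)}`: x₁⊗x₂⊗x₃ ↦ x₃⊗x₂⊗x₁. -/
def phi13 : M ⊗[K] (M ⊗[K] M) →ₗ[K] M ⊗[K] (M ⊗[K] M) :=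
  phi12 K M ∘ₗ phi23 K M ∘ₗ phi12 K M

/-- `Φ_{(213)}`: x₁⊗x₂⊗x₃ ↦ x₂⊗x₃⊗x₁. -/
def phi213 : M ⊗[K] (M ⊗[K] M) →ₗ[K] M ⊗[K] (M ⊗[K] M) :=
  phi23 K M ∘ₗ phi12 K M

/-- `Φ_{(231)}`: x₁⊗x₂⊗x₃ ↦ x₃⊗x₁⊗x₂. -/
def phi231 : M ⊗[K] (M ⊗[K] M) →ₗ[K] M ⊗[K] (M ⊗[K] M) :=
  phi12 K M ∘ₗ phi23 K M

/-- The `β`-coassociator `c_β(Δ) = (Δ⊗β)∘Δ - (β⊗Δ)∘Δ`, valued in `M ⊗ (M ⊗ M)`. -/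
def coassociator (Δ : M →ₗ[K] M ⊗[K] M) (β : M →ₗ[K] M) :
    M →ₗ[K] M ⊗[K] (M ⊗[K] M) :=
  (TensorProduct.assoc K M M M).toLinearMap ∘ₗ TensorProduct.map Δ β ∘ₗ Δ
    - TensorProduct.map β Δ ∘ₗ Δ

/-- The opposite comultiplication `Δ^op = τ ∘ Δ`. -/
def deltaOp (Δ : M →ₗ[K] M ⊗[K] M) : M →ₗ[K] M ⊗[K] M :=
  (TensorProduct.comm K M M).toLinearMap ∘ₗ Δ

/-- The map `Φ_σ` on `M ⊗ (M ⊗ M)` induced by `σ ∈ S₃` (on positions `0,1,2`),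
`x₁⊗x₂⊗x₃ ↦ x_{σ⁻¹(1)}⊗x_{σ⁻¹(2)}⊗x_{σ⁻¹(3)}`. -/
def Phi (σ : Equiv.Perm (Fin 3)) : M ⊗[K] (M ⊗[K] M) →ₗ[K] M ⊗[K] (M ⊗[K] M) :=
  if σ = 1 then LinearMap.id
  else if σ = Equiv.swap 0 1 then phi12 K M
  else if σ = Equiv.swap 1 2 then phi23 K M
  else if σ = Equiv.swap 0 2 then phi13 K M
  else if σ = Equiv.swap 0 1 * Equiv.swap 1 2 then phi231 K M
  else phi213 K M

namespace TensorProduct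

variable {R A B C D : Type*} [CommRing R] [AddCommGroup A] [AddCommGroup B] [AddCommGroup C]
  [AddCommGroup D] [Module R A] [Module R B] [Module R C] [Module R D]

lemma map_sub_left (f₁ f₂ : A →ₗ[R] B) (g : C →ₗ[R] D) :
    map (f₁ - f₂) g = map f₁ g - map f₂ g :=
  (mapBilinear (RingHom.id R) A C B D).map_sub₂ f₁ f₂ g

lemma map_sub_right (f : A →ₗ[R] B) (g₁ g₂ : C →ₗ[R] D) :
    map f (g₁ - g₂) = map f g₁ - map f g₂ :=
  (mapBilinear (RingHom.id R) A C B D f).map_sub g₁ g₂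

end TensorProduct

@[simp] lemma phi12_tmul (a b c : M) : phi12 K M (a ⊗ₜ (b ⊗ₜ c)) = b ⊗ₜ (a ⊗ₜ c) := by
  simp [phi12]

@[simp] lemma phi23_tmul (a b c : M) : phi23 K M (a ⊗ₜ (b ⊗ₜ c)) = a ⊗ₜ (c ⊗ₜ b) := by
  simp [phi23]

@[simp] lemma phi13_tmul (a b c : M) : phi13 K M (a ⊗ₜ (b ⊗ₜ c)) = c ⊗ₜ (b ⊗ₜ a) := by
  simp [phi13]

@[simp] lemma phi213_tmul (a b c : M) : phi213 K M (a ⊗ₜ (b ⊗ₜ c)) = b ⊗ₜ (c ⊗ₜ a) := by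
  simp [phi213]

@[simp] lemma phi231_tmul (a b c : M) : phi231 K M (a ⊗ₜ (b ⊗ₜ c)) = c ⊗ₜ (a ⊗ₜ b) := by
  simp [phi231]

lemma phi213_phi23 (t : M ⊗[K] (M ⊗[K] M)) : phi213 K M (phi23 K M t) = phi13 K M t :=
  LinearMap.congr_fun (show phi213 K M ∘ₗ phi23 K M = phi13 K M by ext; simp) t

lemma phi231_phi12 (t : M ⊗[K] (M ⊗[K] M)) : phi231 K M (phi12 K M t) = phi13 K M t :=
  LinearMap.congr_fun (show phi231 K M ∘ₗ phi12 K M = phi13 K M by ext; simp) t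

def cyclicSum : Module.End K (M ⊗[K] (M ⊗[K] M)) :=
  LinearMap.id + phi213 K M + phi231 K M

def antisymmetrizer : Module.End K (M ⊗[K] (M ⊗[K] M)) :=
  ∑ σ : Equiv.Perm (Fin 3), (Equiv.Perm.sign σ : ℤ) • Phi K M σ

lemma antisymmetrizer_eq :
    antisymmetrizer K M =
      LinearMap.id - phi12 K M - phi23 K M - phi13 K M + phi213 K M + phi231 K M := by
  rw [antisymmetrizer, show (Finset.univ : Finset (Equiv.Perm (Fin 3))) =
      {1, Equiv.swap 0 1, Equiv.swap 1 2, Equiv.swap 0 2,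
       Equiv.swap 0 1 * Equiv.swap 1 2, Equiv.swap 1 2 * Equiv.swap 0 1} by decide]
  simp +decide only [Fin.isValue, Phi, smul_ite, Finset.mem_insert, not_false_eq_true,
    Finset.sum_insert, ↓reduceIte, Equiv.Perm.sign_one, Units.val_one, one_smul,
    Equiv.Perm.sign_swap', Units.val_neg, Int.reduceNeg, neg_smul, Finset.mem_singleton,
    Equiv.Perm.sign_mul, mul_neg, mul_one, neg_neg, Finset.sum_singleton]
  abel

lemma cyclicSum_comp_eq_two_smul_antisymmetrizer_left :
    cyclicSum K M ∘ₗ (LinearMap.id - phi12 K M + phi231 K M - phi13 K M) =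
      (2 : K) • antisymmetrizer K M := by
  rw [antisymmetrizer_eq]
  ext
  simp only [cyclicSum, AlgebraTensorModule.curry_apply, LinearMap.restrictScalars_self, curry_apply,
    LinearMap.coe_comp, Function.comp_apply, LinearMap.add_apply, LinearMap.sub_apply,
    LinearMap.id_coe, id_eq, map_add, map_sub, smul_add, two_smul, phi12_tmul,
    phi23_tmul, phi13_tmul, phi213_tmul, phi231_tmul]
  abel

lemma cyclicSum_comp_eq_two_smul_antisymmetrizer_right :
    cyclicSum K M ∘ₗ (LinearMap.id - phi23 K M - phi13 K M + phi213 K M) =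
      (2 : K) • antisymmetrizer K M := by
  rw [antisymmetrizer_eq]
  ext
  simp only [cyclicSum, AlgebraTensorModule.curry_apply, LinearMap.restrictScalars_self, curry_apply,
    LinearMap.coe_comp, Function.comp_apply, LinearMap.add_apply, LinearMap.sub_apply,
    LinearMap.id_coe, id_eq, map_add, map_sub, smul_add, two_smul, phi12_tmul,
    phi23_tmul, phi13_tmul, phi213_tmul, phi231_tmul]
  abel

lemma assoc_comp_rTensor_comm :
    (TensorProduct.assoc K M M M).toLinearMap ∘ₗ (TensorProduct.comm K M M).toLinearMap.rTensor M =
      phi12 K M ∘ₗ (TensorProduct.assoc K M M M).toLinearMap := by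
  ext; simp

lemma assoc_comp_comm :
    (TensorProduct.assoc K M M M).toLinearMap ∘ₗ (TensorProduct.comm K M (M ⊗[K] M)).toLinearMap =
      phi213 K M := by
  ext; simp

lemma comm_eq_phi231_comp_assoc :
    (TensorProduct.comm K (M ⊗[K] M) M).toLinearMap =
      phi231 K M ∘ₗ (TensorProduct.assoc K M M M).toLinearMap := by
  ext; simp

@[simp] lemma deltaOp_apply (f : M →ₗ[K] M ⊗[K] M) (x : M) :
    deltaOp K M f x = TensorProduct.comm K M M (f x) := rfl

section

variable (f : M →ₗ[K] M ⊗[K] M) (g : M →ₗ[K] M) (t : M ⊗[K] M)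

lemma assoc_map_deltaOp_left :
    TensorProduct.assoc K M M M (TensorProduct.map (deltaOp K M f) g t) =
      phi12 K M (TensorProduct.assoc K M M M (TensorProduct.map f g t)) := by
  rw [deltaOp, ← LinearMap.rTensor_map]
  exact LinearMap.congr_fun (assoc_comp_rTensor_comm K M) _

lemma map_deltaOp_right :
    TensorProduct.map g (deltaOp K M f) t = phi23 K M (TensorProduct.map g f t) :=
  (LinearMap.lTensor_map _ _ _ _ _).symm

lemma assoc_map_comm :
    TensorProduct.assoc K M M M (TensorProduct.map f g (TensorProduct.comm K M M t)) =
      phi213 K M (TensorProduct.map g f t) := by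
  rw [TensorProduct.map_comm]
  exact LinearMap.congr_fun (assoc_comp_comm K M) _

lemma map_comm_eq_phi231 :
    TensorProduct.map g f (TensorProduct.comm K M M t) =
      phi231 K M (TensorProduct.assoc K M M M (TensorProduct.map f g t)) := by
  rw [TensorProduct.map_comm]
  exact LinearMap.congr_fun (comm_eq_phi231_comp_assoc K M) _

end

section

variable (Δ : M →ₗ[K] M ⊗[K] M) (β : M →ₗ[K] M)

lemma coassociator_sub_deltaOp :
    coassociator K M (Δ - deltaOp K M Δ) β =
      (LinearMap.id - phi12 K M + phi231 K M - phi13 K M) ∘ₗ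
          ((TensorProduct.assoc K M M M).toLinearMap ∘ₗ TensorProduct.map Δ β ∘ₗ Δ) -
        (LinearMap.id - phi23 K M - phi13 K M + phi213 K M) ∘ₗ (TensorProduct.map β Δ ∘ₗ Δ) := by
  ext x
  simp only [coassociator, TensorProduct.map_sub_left, TensorProduct.map_sub_right,
    LinearMap.sub_apply, LinearMap.add_apply, LinearMap.comp_apply, LinearMap.id_apply,
    LinearEquiv.coe_coe, map_sub, deltaOp_apply, assoc_map_deltaOp_left, map_deltaOp_right,
    assoc_map_comm, map_comm_eq_phi231, phi213_phi23, phi231_phi12]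
  abel

lemma cyclicSum_comp_coassociator_sub_deltaOp :
    cyclicSum K M ∘ₗ coassociator K M (Δ - deltaOp K M Δ) β =
      (2 : K) • (antisymmetrizer K M ∘ₗ coassociator K M Δ β) := by
  rw [coassociator_sub_deltaOp, LinearMap.comp_sub, ← LinearMap.comp_assoc _ _ (cyclicSum K M),
    ← LinearMap.comp_assoc _ _ (cyclicSum K M), cyclicSum_comp_eq_two_smul_antisymmetrizer_left,
    cyclicSum_comp_eq_two_smul_antisymmetrizer_right, ← LinearMap.comp_sub, LinearMap.smul_comp,
    coassociator]

end

/-- `(V,Δ,β)` is Hom-Lie admissible iff `Σ_{σ∈S₃} sgn(σ) Φ_σ ∘ c_β(Δ) = 0`. -/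
theorem homLie_admissible_iff [CharZero K] (Δ : M →ₗ[K] M ⊗[K] M) (β : M →ₗ[K] M) :
    (coassociator K M (Δ - deltaOp K M Δ) β
      + phi213 K M ∘ₗ coassociator K M (Δ - deltaOp K M Δ) β
      + phi231 K M ∘ₗ coassociator K M (Δ - deltaOp K M Δ) β = 0) ↔
    ∑ σ : Equiv.Perm (Fin 3),
      ((Equiv.Perm.sign σ : ℤ) • (Phi K M σ ∘ₗ coassociator K M Δ β)) = 0 := by
  have h_cyclic : coassociator K M (Δ - deltaOp K M Δ) β
      + phi213 K M ∘ₗ coassociator K M (Δ - deltaOp K M Δ) β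
      + phi231 K M ∘ₗ coassociator K M (Δ - deltaOp K M Δ) β =
      cyclicSum K M ∘ₗ coassociator K M (Δ - deltaOp K M Δ) β := by
    simp only [cyclicSum, LinearMap.add_comp, LinearMap.id_comp]
  have h_alternating : ∑ σ : Equiv.Perm (Fin 3),
      ((Equiv.Perm.sign σ : ℤ) • (Phi K M σ ∘ₗ coassociator K M Δ β)) =
      antisymmetrizer K M ∘ₗ coassociator K M Δ β := by
    ext x
    simp only [antisymmetrizer, LinearMap.coe_sum, Finset.sum_apply, LinearMap.smul_apply,
      LinearMap.comp_apply]
  rw [h_cyclic, h_alternating, cyclicSum_comp_coassociator_sub_deltaOp, smul_eq_zero,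
    or_iff_right two_ne_zero]
end
end

section
/- Let (V, Δ, β) be a G-Hom-coalgebra for a subgroup G of S₃. Then the dual space V* with multiplication μ = Δ* (via f·g = μ_K ∘ (f⊗g) ∘ Δ) and twisting map α = β* (α(f) = f∘β) is a G-Hom-associative algebra, i.e., Σ_{σ∈G} sgn(σ) a_{α,μ} ∘ Φ_σ = 0 where a_{α,μ} = μ∘(μ⊗α) - μ∘(α⊗μ). -/
open TensorProduct

noncomputable section

variable (K : Type*) [Field K] (M : Type*) [AddCommGroup M] [Module K M]

/-- The product on the dual space: `(f·g) = μ_K ∘ (f⊗g) ∘ Δ`. -/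
def dualMul (Δ : M →ₗ[K] M ⊗[K] M) (f g : Module.Dual K M) : Module.Dual K M :=
  LinearMap.mul' K K ∘ₗ TensorProduct.map f g ∘ₗ Δ

/-- The `α`-associator of the dual product evaluated at `(f,g,h)`:
`a_{α,μ}(f,g,h) = (f·g)·α(h) - α(f)·(g·h)` with `α(f) = f∘β`. -/
def dualAssociator (Δ : M →ₗ[K] M ⊗[K] M) (β : M →ₗ[K] M)
    (f g h : Module.Dual K M) : Module.Dual K M :=
  dualMul K M Δ (dualMul K M Δ f g) (h ∘ₗ β) - dualMul K M Δ (f ∘ₗ β) (dualMul K M Δ g h)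

/-! Pairing with `f ⊗ g ⊗ h` turns the dual associator `a_{α,μ}(f, g, h)` into the functional
`(f ⊗ g ⊗ h) ∘ c_β(Δ)`, and precomposing that pairing with `Φ_σ` permutes `f, g, h` by `σ`.
So the signed sum over `G` of permuted associators is `f ⊗ g ⊗ h` applied to
`Σ sgn(σ) Φ_σ ∘ c_β(Δ) = 0`, once the sum is reindexed by `σ ↦ σ⁻¹`, which preserves `G`
and the sign. -/

variable {K M}

open Module

lemma dualDistrib_comp_map {R A B A' B' : Type*} [CommSemiring R]
    [AddCommMonoid A] [Module R A] [AddCommMonoid B] [Module R B]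
    [AddCommMonoid A'] [Module R A'] [AddCommMonoid B'] [Module R B']
    (f : Dual R A) (g : Dual R B) (p : A' →ₗ[R] A) (q : B' →ₗ[R] B) :
    dualDistrib R A B (f ⊗ₜ g) ∘ₗ map p q = dualDistrib R A' B' ((f ∘ₗ p) ⊗ₜ (g ∘ₗ q)) :=
  TensorProduct.ext' fun x y => by simp

lemma dualMul_eq_dualDistrib_comp (Δ : M →ₗ[K] M ⊗[K] M) (f g : Dual K M) :
    dualMul K M Δ f g = dualDistrib K M M (f ⊗ₜ g) ∘ₗ Δ :=
  rfl

def tripleDual (f g h : Dual K M) : Dual K (M ⊗[K] (M ⊗[K] M)) :=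
  dualDistrib K M (M ⊗[K] M) (f ⊗ₜ dualDistrib K M M (g ⊗ₜ h))

@[simp]
lemma tripleDual_tmul (f g h : Dual K M) (x y z : M) :
    tripleDual f g h (x ⊗ₜ (y ⊗ₜ z)) = f x * (g y * h z) := by
  simp [tripleDual]

lemma tripleDual_comp_assoc (f g h : Dual K M) :
    tripleDual f g h ∘ₗ (TensorProduct.assoc K M M M).toLinearMap
      = dualDistrib K (M ⊗[K] M) M (dualDistrib K M M (f ⊗ₜ g) ⊗ₜ h) :=
  TensorProduct.ext_threefold fun x y z => by simp [mul_assoc]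

lemma dualAssociator_eq_tripleDual_comp_coassociator (Δ : M →ₗ[K] M ⊗[K] M) (β : M →ₗ[K] M)
    (f g h : Dual K M) :
    dualAssociator K M Δ β f g h = tripleDual f g h ∘ₗ coassociator K M Δ β := by
  simp only [dualAssociator, coassociator, LinearMap.comp_sub, dualMul_eq_dualDistrib_comp,
    ← LinearMap.comp_assoc, tripleDual_comp_assoc]
  simp only [tripleDual, dualDistrib_comp_map]

lemma perm_fin_three_cases (σ : Equiv.Perm (Fin 3)) :
    σ = 1 ∨ σ = Equiv.swap 0 1 ∨ σ = Equiv.swap 1 2 ∨ σ = Equiv.swap 0 2 ∨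
      σ = Equiv.swap 0 1 * Equiv.swap 1 2 ∨ σ = Equiv.swap 1 2 * Equiv.swap 0 1 := by
  revert σ; decide

lemma Phi_tmul (σ : Equiv.Perm (Fin 3)) (x : Fin 3 → M) :
    Phi K M σ (x 0 ⊗ₜ (x 1 ⊗ₜ x 2)) = x (σ⁻¹ 0) ⊗ₜ (x (σ⁻¹ 1) ⊗ₜ x (σ⁻¹ 2)) := by
  rcases perm_fin_three_cases σ with rfl | rfl | rfl | rfl | rfl | rfl <;>
    simp +decide [Phi, phi12, phi23, phi13, phi231, phi213, Equiv.swap_apply_def]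

lemma tripleDual_comp_Phi (w : Fin 3 → Dual K M) (σ : Equiv.Perm (Fin 3)) :
    tripleDual (w 0) (w 1) (w 2) ∘ₗ Phi K M σ = tripleDual (w (σ 0)) (w (σ 1)) (w (σ 2)) := by
  refine TensorProduct.ext_threefold' fun x y z => ?_
  let v := ![x, y, z]
  calc tripleDual (w 0) (w 1) (w 2) (Phi K M σ (v 0 ⊗ₜ (v 1 ⊗ₜ v 2)))
      = ∏ i, w i (v (σ⁻¹ i)) := by
        rw [Phi_tmul, tripleDual_tmul, Fin.prod_univ_three, mul_assoc]
    _ = ∏ j, w (σ j) (v j) := by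
        rw [← Equiv.prod_comp σ]
        simp only [Equiv.Perm.coe_inv, Equiv.symm_apply_apply]
    _ = tripleDual (w (σ 0)) (w (σ 1)) (w (σ 2)) (v 0 ⊗ₜ (v 1 ⊗ₜ v 2)) := by
        rw [tripleDual_tmul, Fin.prod_univ_three, mul_assoc]

lemma sum_sign_zsmul_inv {α A : Type*} [Fintype α] [DecidableEq α] [AddCommGroup A]
    (G : Subgroup (Equiv.Perm α)) [Fintype G] (F : Equiv.Perm α → A) :
    ∑ σ : G, (Equiv.Perm.sign (σ : Equiv.Perm α) : ℤ) • F (σ : Equiv.Perm α)⁻¹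
      = ∑ σ : G, (Equiv.Perm.sign (σ : Equiv.Perm α) : ℤ) • F σ :=
  Fintype.sum_equiv (Equiv.inv G) _ _ fun σ => by simp

variable (K M)

open scoped Classical in
/-- the dual of a `G`-Hom-coalgebra `(V,Δ,β)` is a `G`-Hom-associative
algebra: if `Σ_{σ∈G} sgn(σ) Φ_σ ∘ c_β(Δ) = 0`, then the dual product `f·g = μ_K∘(f⊗g)∘Δ`
with twisting `α(f) = f∘β` satisfies `Σ_{σ∈G} sgn(σ) a_{α,μ} ∘ Φ_σ = 0`
(evaluated on all triples `f⊗g⊗h` of dual vectors). -/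
theorem dual_of_GHomCoalgebra (G : Subgroup (Equiv.Perm (Fin 3)))
    (Δ : M →ₗ[K] M ⊗[K] M) (β : M →ₗ[K] M)
    (hG : ∑ σ : G, ((Equiv.Perm.sign (σ : Equiv.Perm (Fin 3)) : ℤ) •
        (Phi K M (σ : Equiv.Perm (Fin 3)) ∘ₗ coassociator K M Δ β)) = 0) :
    ∀ f g h : Module.Dual K M,
      ∑ σ : G, ((Equiv.Perm.sign (σ : Equiv.Perm (Fin 3)) : ℤ) •
        dualAssociator K M Δ β
          (![f, g, h] ((σ : Equiv.Perm (Fin 3))⁻¹ 0))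
          (![f, g, h] ((σ : Equiv.Perm (Fin 3))⁻¹ 1))
          (![f, g, h] ((σ : Equiv.Perm (Fin 3))⁻¹ 2))) = 0 := by
  intro f g h
  have hterm (σ : Equiv.Perm (Fin 3)) :
      dualAssociator K M Δ β (![f, g, h] (σ⁻¹ 0)) (![f, g, h] (σ⁻¹ 1)) (![f, g, h] (σ⁻¹ 2))
        = tripleDual f g h ∘ₗ (Phi K M σ⁻¹ ∘ₗ coassociator K M Δ β) := by
    rw [dualAssociator_eq_tripleDual_comp_coassociator, ← LinearMap.comp_assoc]
    exact congrArg (· ∘ₗ _) (tripleDual_comp_Phi ![f, g, h] σ⁻¹).symm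
  simp only [hterm]
  rw [sum_sign_zsmul_inv G fun σ => tripleDual f g h ∘ₗ (Phi K M σ ∘ₗ coassociator K M Δ β)]
  simpa [map_sum] using congrArg (LinearMap.compRight K (tripleDual f g h)) hG
end
end
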